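/- Let G = (V,E) be a simple graph and P = {x : E → ℝ : x ≥ 0 and ∑_{e ∈ E(G[U])} x(e) ≤ |U| − 1 for all nonempty U ⊆ V} the maximum weight forest polytope. Then for every extreme point x = X(F) of P (F a forest in G), there is a circuit walk of at most 5 maximal steps from the zero vector to x using only 0/±1 circuits of (Rank), with every intermediate point an extreme point of P; consequently the circuit diameter of P is at most 9 (and at most 6 when |V| ≤ 4). -/

import Mathlib

/-- The row of the rank-inequality matrix indexed by `U ⊆ V`, applied to `g`:
`∑_{e ∈ E(G[U])} g(e)`. -/
def rowSum {V : Type*} [Fintype V] [DecidableEq V] (G : SimpleGraph V) [DecidableRel G.Adj]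
    (g : G.edgeSet → ℝ) (U : Finset V) : ℝ :=
  ∑ e : G.edgeSet, if ∀ v ∈ (e : Sym2 V), v ∈ U then g e else 0

/-- The support of `B g` for the rank-inequality matrix `B`: the nonempty sets `U` whose
rank row evaluates to a nonzero value on `g`. -/
def Bsupp {V : Type*} [Fintype V] [DecidableEq V] (G : SimpleGraph V) [DecidableRel G.Adj]
    (g : G.edgeSet → ℝ) : Set (Finset V) :=
  {U | U.Nonempty ∧ rowSum G g U ≠ 0}

/-- A circuit of the rank-inequality system: a nonzero vector `g` such that `B g` is
support-minimal over `{B x : x ≠ 0}`. -/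
def IsCircuit {V : Type*} [Fintype V] [DecidableEq V] (G : SimpleGraph V) [DecidableRel G.Adj]
    (g : G.edgeSet → ℝ) : Prop :=
  g ≠ 0 ∧ ∀ y : G.edgeSet → ℝ, y ≠ 0 → ¬ Bsupp G y ⊂ Bsupp G g

/-- The unit vector supported on the edge `e`. -/
def unitVec {V : Type*} [DecidableEq V] (G : SimpleGraph V) (e : G.edgeSet) :
    G.edgeSet → ℝ :=
  fun f => if f = e then 1 else 0

/-- The spanning subgraph of `G` with edge set `R`. -/
def edgeSub {V : Type*} (G : SimpleGraph V) (R : Set G.edgeSet) : SimpleGraph V where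
  Adj u v := u ≠ v ∧ ∃ e ∈ R, (e : Sym2 V) = s(u, v)
  symm := ⟨by
    rintro u v ⟨huv, e, heR, he⟩
    exact ⟨huv.symm, e, heR, by rw [he, Sym2.eq_swap]⟩⟩
  loopless := ⟨by rintro v ⟨hv, _⟩; exact hv rfl⟩

/-- The maximum weight forest polytope of `G`. -/
def MWF {V : Type*} [Fintype V] [DecidableEq V] (G : SimpleGraph V) [DecidableRel G.Adj] :
    Set (G.edgeSet → ℝ) :=
  {x | (∀ e, 0 ≤ x e) ∧ ∀ U : Finset V, U.Nonempty → rowSum G x U ≤ (U.card : ℝ) - 1}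

/-- The characteristic vector of an edge set `F`. -/
def chiVec {V : Type*} [DecidableEq V] (G : SimpleGraph V) (F : Finset G.edgeSet) :
    G.edgeSet → ℝ :=
  fun e => if e ∈ F then 1 else 0

/-- A maximal step of a circuit walk in the maximum weight forest polytope: move from
`x` to `x'` along a circuit direction with a maximal feasible step length. -/
def IsMaxStep {V : Type*} [Fintype V] [DecidableEq V] (G : SimpleGraph V)
    [DecidableRel G.Adj] (x x' : G.edgeSet → ℝ) : Prop :=
  ∃ (gdir : G.edgeSet → ℝ) (eps : ℝ), IsCircuit G gdir ∧ 0 < eps ∧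
    x' = x + eps • gdir ∧ ∀ eps' : ℝ, eps < eps' → x + eps' • gdir ∉ MWF G

/-- A maximal circuit step whose direction is moreover a 0/±1 circuit. -/
def IsMaxStep01 {V : Type*} [Fintype V] [DecidableEq V] (G : SimpleGraph V)
    [DecidableRel G.Adj] (x x' : G.edgeSet → ℝ) : Prop :=
  ∃ (gdir : G.edgeSet → ℝ) (eps : ℝ), IsCircuit G gdir ∧
    (∀ e, gdir e = 0 ∨ gdir e = 1 ∨ gdir e = -1) ∧ 0 < eps ∧
    x' = x + eps • gdir ∧ ∀ eps' : ℝ, eps < eps' → x + eps' • gdir ∉ MWF G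

/-- A circuit walk in the maximum weight forest polytope. -/
def IsCircuitWalk {V : Type*} [Fintype V] [DecidableEq V] (G : SimpleGraph V)
    [DecidableRel G.Adj] (k : ℕ) (x : Fin (k + 1) → G.edgeSet → ℝ) : Prop :=
  (∀ i, x i ∈ MWF G) ∧ ∀ i : Fin k, IsMaxStep G (x i.castSucc) (x i.succ)

/-!
A unit move `x ↦ x + g` along a 0/±1 circuit `g` between two points of the polytope is
automatically a maximal step: some coordinate of `x` is pushed from one of its bounds `0`, `1`
to the other. The extreme points are exactly the 0/1 vectors `χ(F)`: a fractional point can be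
perturbed along `1_e`, or along `1_e - 1_f` for two fractional edges `e`, `f` of a smallest
tight set that spans a fractional edge. For an edge `e ∈ F`, let `S₁`, `S₂` be the other
edges of `F` meeting and missing `e`. Each `f ∈ Sᵢ` is the only edge of `Sᵢ` spanned by the
endpoints of `e` and `f` (for `S₁` because `F` carries no triangle), which makes `1_{Sᵢ} - 1_e`
a circuit; so `0 → {e} → S₁ → S₁ ∪ {e} → F ∖ {e} → F` is a walk of unit circuit moves. Two such walks,
one reversed, meet in 9 steps when the middle moves `-1_{e₁}`, `+1_{e₂}` are merged into
`1_{e₂} - 1_{e₁}`. On at most four vertices a forest has at most three edges, so adding and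
removing edges one at a time takes at most 6 steps.
-/

open Finset Filter Topology

section
variable {V : Type*} {G : SimpleGraph V}

lemma edge_eq_of_forall_mem {e f : G.edgeSet} (h : ∀ v ∈ (e : Sym2 V), v ∈ (f : Sym2 V)) :
    e = f := by
  obtain ⟨e, he⟩ := e
  induction e using Sym2.ind with
  | h a b =>
    exact Subtype.ext ((Sym2.mem_and_mem_iff (G.ne_of_adj he)).1
      ⟨h a (Sym2.mem_mk_left a b), h b (Sym2.mem_mk_right a b)⟩).symm

end

section
variable {V : Type*} [DecidableEq V] {G : SimpleGraph V}

lemma card_toFinset_edge (e : G.edgeSet) : #(e : Sym2 V).toFinset = 2 :=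
  Sym2.card_toFinset_of_not_isDiag _ (G.not_isDiag_of_mem_edgeSet e.2)

lemma chiVec_empty : chiVec G ∅ = 0 := by
  funext e
  simp [chiVec]

lemma chiVec_insert {e : G.edgeSet} {A : Finset G.edgeSet} (he : e ∉ A) :
    chiVec G (insert e A) = chiVec G A + unitVec G e := by
  funext f
  by_cases hf : f = e
  · subst hf
    simp [chiVec, unitVec, he]
  · simp [chiVec, unitVec, hf]

lemma chiVec_union {A S : Finset G.edgeSet} (h : Disjoint A S) :
    chiVec G (A ∪ S) = chiVec G A + chiVec G S := by
  funext f
  by_cases hA : f ∈ A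
  · simp [chiVec, hA, disjoint_left.1 h hA]
  · simp [chiVec, hA]

end

section
variable {V : Type*} [Fintype V] [DecidableEq V] {G : SimpleGraph V} [DecidableRel G.Adj]

variable (G) in
def edgesIn (U : Finset V) : Finset G.edgeSet :=
  {e | ∀ v ∈ (e : Sym2 V), v ∈ U}

lemma mem_edgesIn {e : G.edgeSet} {U : Finset V} :
    e ∈ edgesIn G U ↔ ∀ v ∈ (e : Sym2 V), v ∈ U := by
  simp [edgesIn]

lemma nonempty_of_mem_edgesIn {e : G.edgeSet} {U : Finset V} (he : e ∈ edgesIn G U) :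
    U.Nonempty :=
  ⟨_, mem_edgesIn.1 he _ (Sym2.out_fst_mem _)⟩

lemma edgesIn_mono {U W : Finset V} (h : U ⊆ W) : edgesIn G U ⊆ edgesIn G W :=
  fun _ he => mem_edgesIn.2 fun v hv => h (mem_edgesIn.1 he v hv)

lemma edgesIn_inter (U W : Finset V) : edgesIn G (U ∩ W) = edgesIn G U ∩ edgesIn G W := by
  ext e
  simp only [mem_inter, mem_edgesIn, forall_and]

lemma edgesIn_univ : edgesIn G univ = univ := by
  ext e
  simp [mem_edgesIn]

lemma edgesIn_toFinset (e : G.edgeSet) : edgesIn G (e : Sym2 V).toFinset = {e} := by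
  ext f
  simp only [mem_edgesIn, Sym2.mem_toFinset, mem_singleton]
  exact ⟨edge_eq_of_forall_mem, fun h => h ▸ fun _ => id⟩

lemma rowSum_eq_sum (g : G.edgeSet → ℝ) (U : Finset V) :
    rowSum G g U = ∑ e ∈ edgesIn G U, g e :=
  (sum_filter _ _).symm

lemma rowSum_add (x y : G.edgeSet → ℝ) (U : Finset V) :
    rowSum G (x + y) U = rowSum G x U + rowSum G y U := by
  simp only [rowSum_eq_sum, Pi.add_apply, sum_add_distrib]

lemma rowSum_smul (c : ℝ) (x : G.edgeSet → ℝ) (U : Finset V) :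
    rowSum G (c • x) U = c * rowSum G x U := by
  simp only [rowSum_eq_sum, Pi.smul_apply, smul_eq_mul, mul_sum]

lemma rowSum_sub (x y : G.edgeSet → ℝ) (U : Finset V) :
    rowSum G (x - y) U = rowSum G x U - rowSum G y U := by
  simp only [rowSum_eq_sum, Pi.sub_apply, sum_sub_distrib]

lemma rowSum_toFinset (g : G.edgeSet → ℝ) (e : G.edgeSet) :
    rowSum G g (e : Sym2 V).toFinset = g e := by
  rw [rowSum_eq_sum, edgesIn_toFinset, sum_singleton]

lemma rowSum_unitVec (e : G.edgeSet) (U : Finset V) :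
    rowSum G (unitVec G e) U = if e ∈ edgesIn G U then 1 else 0 := by
  simp only [rowSum_eq_sum, unitVec, sum_ite_eq']

lemma rowSum_chiVec (F : Finset G.edgeSet) (U : Finset V) :
    rowSum G (chiVec G F) U = #(edgesIn G U ∩ F) := by
  simp only [rowSum_eq_sum, chiVec, sum_boole, filter_mem_eq_inter]

lemma le_one_of_mem_MWF {x : G.edgeSet → ℝ} (hx : x ∈ MWF G) (e : G.edgeSet) : x e ≤ 1 := by
  have h := hx.2 _ (nonempty_iff_ne_empty.2 (Sym2.toFinset_ne_empty (e : Sym2 V)))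
  rw [rowSum_toFinset, card_toFinset_edge] at h
  norm_num at h
  exact h

lemma card_edgesIn_inter_add_one_le {F : Finset G.edgeSet} (hF : chiVec G F ∈ MWF G)
    {U : Finset V} (hU : U.Nonempty) : #(edgesIn G U ∩ F) + 1 ≤ #U := by
  have h := hF.2 U hU
  rw [rowSum_chiVec] at h
  exact_mod_cast (le_sub_iff_add_le.1 h)

lemma card_lt_card_of_chiVec_mem {F : Finset G.edgeSet} (hF : chiVec G F ∈ MWF G)
    (hne : F.Nonempty) : #F < Fintype.card V := by
  obtain ⟨e, he⟩ := hne
  have h := card_edgesIn_inter_add_one_le hF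
    (nonempty_of_mem_edgesIn (edgesIn_univ (G := G) ▸ mem_univ e))
  rwa [edgesIn_univ, univ_inter, card_univ] at h

lemma chiVec_mem_MWF_of_subset {A F : Finset G.edgeSet} (hAF : A ⊆ F)
    (hF : chiVec G F ∈ MWF G) : chiVec G A ∈ MWF G := by
  refine ⟨fun e => by unfold chiVec; split_ifs <;> norm_num, fun U hU => ?_⟩
  refine le_trans ?_ (hF.2 U hU)
  rw [rowSum_chiVec, rowSum_chiVec]
  exact_mod_cast card_le_card (inter_subset_inter_left hAF)

lemma MWF_subset_cube : MWF G ⊆ Set.univ.pi fun _ => Set.Icc 0 1 :=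
  fun _ hx e _ => ⟨hx.1 e, le_one_of_mem_MWF hx e⟩

lemma chiVec_mem_extremePoints {F : Finset G.edgeSet} (hF : chiVec G F ∈ MWF G) :
    chiVec G F ∈ (MWF G).extremePoints ℝ := by
  refine inter_extremePoints_subset_extremePoints_of_subset MWF_subset_cube ⟨hF, ?_⟩
  rw [extremePoints_pi, Set.extremePoints_Icc zero_le_one]
  intro e _
  unfold chiVec
  split_ifs <;> simp

lemma Bsupp_smul {c : ℝ} (hc : c ≠ 0) (y : G.edgeSet → ℝ) : Bsupp G (c • y) = Bsupp G y := by
  ext U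
  simp [Bsupp, rowSum_smul, hc]

lemma IsCircuit.neg {g : G.edgeSet → ℝ} (h : IsCircuit G g) : IsCircuit G (-g) := by
  have hneg : Bsupp G (-g) = Bsupp G g := by
    rw [← neg_one_smul ℝ g, Bsupp_smul (by norm_num)]
  exact ⟨neg_ne_zero.2 h.1, fun y hy hsub => h.2 y hy (hneg ▸ hsub)⟩

lemma ne_zero_of_Bsupp_subset {y g : G.edgeSet → ℝ} (hsub : Bsupp G y ⊆ Bsupp G g)
    {f : G.edgeSet} (hf : y f ≠ 0) : g f ≠ 0 := by
  have hU : (f : Sym2 V).toFinset ∈ Bsupp G y :=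
    ⟨nonempty_iff_ne_empty.2 (Sym2.toFinset_ne_empty _), by rwa [rowSum_toFinset]⟩
  simpa only [rowSum_toFinset] using (hsub hU).2

variable (G) in
def SingledOut (e : G.edgeSet) (S : Finset G.edgeSet) : Prop :=
  ∀ f ∈ S, ∃ U : Finset V, e ∈ edgesIn G U ∧ S ∩ edgesIn G U = {f}

lemma singledOut_of_card_le_one (e : G.edgeSet) {S : Finset G.edgeSet} (hS : #S ≤ 1) :
    SingledOut G e S := fun f hf =>
  ⟨univ, by simp [edgesIn_univ],
    by rw [edgesIn_univ, inter_univ, eq_singleton_iff_unique_mem]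
       exact ⟨hf, fun f' hf' => card_le_one.1 hS f' hf' f hf⟩⟩

lemma rowSum_eq_add_of_singledOut {e f : G.edgeSet} {S : Finset G.edgeSet} {U : Finset V}
    {z : G.edgeSet → ℝ} (hz : ∀ f', f' ∉ insert e S → z f' = 0) (hef : e ≠ f)
    (heU : e ∈ edgesIn G U) (hSU : S ∩ edgesIn G U = {f}) :
    rowSum G z U = z e + z f := by
  have hinter : edgesIn G U ∩ insert e S = {e, f} := by
    rw [inter_insert_of_mem heU, inter_comm, hSU]
  rw [rowSum_eq_sum, ← sum_subset inter_subset_left fun f' _ hf' => hz f' fun h =>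
    hf' (mem_inter.2 ⟨by assumption, h⟩), hinter, sum_pair hef]

theorem isCircuit_chiVec_sub_unitVec {e : G.edgeSet} {S : Finset G.edgeSet} (he : e ∉ S)
    (hS : SingledOut G e S) : IsCircuit G (chiVec G S - unitVec G e) := by
  set g := chiVec G S - unitVec G e
  have hg_e : g e = -1 := by simp [g, chiVec, unitVec, he]
  have hg_S : ∀ f ∈ S, g f = 1 := fun f hf => by
    simp [g, chiVec, unitVec, hf, show f ≠ e from fun h => he (h ▸ hf)]
  have hg_supp : ∀ f, f ∉ insert e S → g f = 0 := fun f hf => by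
    rw [mem_insert, not_or] at hf
    simp [g, chiVec, unitVec, hf.1, hf.2]
  refine ⟨fun h => by simpa [hg_e] using congrFun h e, fun y hy hsub => ?_⟩
  have hy_supp : ∀ f, f ∉ insert e S → y f = 0 := fun f hf => by
    by_contra hne
    exact ne_zero_of_Bsupp_subset hsub.subset hne (hg_supp f hf)
  -- Every such `U` has a zero row for `g`, hence for `y`, which couples `y f` to `y e`.
  have hy_S : ∀ f ∈ S, y f = -y e := by
    intro f hf
    obtain ⟨U, heU, hSU⟩ := hS f hf
    have hef : e ≠ f := fun h => he (h ▸ hf)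
    have hgU : rowSum G g U = 0 := by
      rw [rowSum_eq_add_of_singledOut hg_supp hef heU hSU, hg_e, hg_S f hf]
      norm_num
    have hyU : rowSum G y U = 0 := by
      by_contra h
      exact (hsub.subset ⟨nonempty_of_mem_edgesIn heU, h⟩).2 hgU
    rw [rowSum_eq_add_of_singledOut hy_supp hef heU hSU] at hyU
    linarith
  have hy_eq : y = (-y e) • g := by
    funext f
    by_cases hfe : f = e
    · subst hfe
      simp [hg_e]
    by_cases hf : f ∈ S
    · simp [hg_S f hf, hy_S f hf]
    · have hf' : f ∉ insert e S := by simp [hfe, hf]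
      simp [hg_supp f hf', hy_supp f hf']
  have hye : -y e ≠ 0 := fun h => hy (by rw [hy_eq, h, zero_smul])
  rw [hy_eq, Bsupp_smul hye] at hsub
  exact hsub.ne rfl

variable (G) in
def IsUnitCircuitStep (x y : G.edgeSet → ℝ) : Prop :=
  ∃ g, IsCircuit G g ∧ (∀ e, g e = 0 ∨ g e = 1 ∨ g e = -1) ∧ y = x + g

lemma IsUnitCircuitStep.symm {x y : G.edgeSet → ℝ} (h : IsUnitCircuitStep G x y) :
    IsUnitCircuitStep G y x := by
  obtain ⟨g, hg, h01, rfl⟩ := h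
  refine ⟨-g, hg.neg, fun e => ?_, by simp⟩
  rcases h01 e with h | h | h <;> simp [h]

lemma IsUnitCircuitStep.isMaxStep01 {x y : G.edgeSet → ℝ} (hx : x ∈ MWF G) (hy : y ∈ MWF G)
    (h : IsUnitCircuitStep G x y) : IsMaxStep01 G x y := by
  obtain ⟨g, hg, h01, rfl⟩ := h
  refine ⟨g, 1, hg, h01, one_pos, by simp, fun t ht hmem => ?_⟩
  obtain ⟨e, he⟩ := Function.ne_iff.1 hg.1
  have hxe := hx.1 e
  have hxe' := le_one_of_mem_MWF hx e
  have hye := hy.1 e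
  have hye' := le_one_of_mem_MWF hy e
  have hte := hmem.1 e
  have hte' := le_one_of_mem_MWF hmem e
  simp only [Pi.add_apply, Pi.smul_apply, smul_eq_mul] at hye hye' hte hte'
  rcases h01 e with h | h | h
  · exact he h
  all_goals rw [h] at hye hye' hte hte'; linarith

lemma IsMaxStep01.isMaxStep {x y : G.edgeSet → ℝ} (h : IsMaxStep01 G x y) : IsMaxStep G x y :=
  let ⟨g, t, hg, _, ht, hxy, hmax⟩ := h
  ⟨g, t, hg, ht, hxy, hmax⟩

lemma isUnitCircuitStep_exchange {e : G.edgeSet} {A S : Finset G.edgeSet} (heA : e ∉ A)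
    (heS : e ∉ S) (hAS : Disjoint A S) (hS : SingledOut G e S) :
    IsUnitCircuitStep G (chiVec G (insert e A)) (chiVec G (A ∪ S)) := by
  refine ⟨chiVec G S - unitVec G e, isCircuit_chiVec_sub_unitVec heS hS, fun f => ?_, ?_⟩
  · by_cases hfe : f = e
    · subst hfe
      simp [chiVec, unitVec, heS]
    · by_cases hf : f ∈ S <;> simp [chiVec, unitVec, hfe, hf]
  · rw [chiVec_union hAS, chiVec_insert heA]
    abel

lemma isUnitCircuitStep_insert {e : G.edgeSet} {A : Finset G.edgeSet} (he : e ∉ A) :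
    IsUnitCircuitStep G (chiVec G A) (chiVec G (insert e A)) := by
  simpa using (isUnitCircuitStep_exchange he (notMem_empty e) (disjoint_empty_right A)
    (singledOut_of_card_le_one e (S := ∅) (by simp))).symm

end

inductive RelPath {α : Type*} (P : α → Prop) (R : α → α → Prop) : ℕ → α → α → Prop
  | nil {a : α} : P a → RelPath P R 0 a a
  | cons {n : ℕ} {a b c : α} : P a → R a b → RelPath P R n b c → RelPath P R (n + 1) a c

namespace RelPath

variable {α : Type*} {P : α → Prop} {R : α → α → Prop} {m n : ℕ} {a b c : α}

lemma single (ha : P a) (hb : P b) (h : R a b) : RelPath P R 1 a b :=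
  cons ha h (nil hb)

lemma left (p : RelPath P R n a b) : P a := by
  cases p <;> assumption

lemma append (p : RelPath P R m a b) (q : RelPath P R n b c) : RelPath P R (m + n) a c := by
  induction p with
  | nil _ => simpa using q
  | cons ha hab _ ih => rw [Nat.add_right_comm]; exact cons ha hab (ih q)

lemma reverse (hR : ∀ {x y}, R x y → R y x) (p : RelPath P R n a b) : RelPath P R n b a := by
  induction p with
  | nil ha => exact nil ha
  | cons ha hab p ih => exact ih.append (single p.left ha (hR hab))

lemma exists_fin (p : RelPath P R n a b) :
    ∃ w : Fin (n + 1) → α, w 0 = a ∧ w (Fin.last n) = b ∧ (∀ i, P (w i)) ∧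
      ∀ i : Fin n, R (w i.castSucc) (w i.succ) := by
  induction p with
  | nil ha => exact ⟨fun _ => _, rfl, rfl, fun _ => ha, Fin.elim0⟩
  | @cons n a b c ha hab p ih =>
    obtain ⟨w, h0, hl, hP, hR⟩ := ih
    refine ⟨Fin.cons a w, rfl, by simpa [← Fin.succ_last] using hl, Fin.cases ha hP,
      Fin.cases ?_ fun i => ?_⟩
    · simpa [h0] using hab
    · simpa [← Fin.succ_castSucc] using hR i

end RelPath

lemma eq_zero_of_mem_extremePoints_of_eventually {E : Type*} [AddCommGroup E] [Module ℝ E]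
    {s : Set E} {x d : E} (hx : x ∈ s.extremePoints ℝ)
    (h : ∀ᶠ t in 𝓝 (0 : ℝ), x + t • d ∈ s) : d = 0 := by
  obtain ⟨δ, hδ, hball⟩ := Metric.eventually_nhds_iff.1 h
  have hlt : |δ / 2| < δ := by rw [abs_of_pos (half_pos hδ)]; exact half_lt_self hδ
  have hseg : x ∈ openSegment ℝ (x + (-(δ / 2)) • d) (x + (δ / 2) • d) :=
    ⟨1 / 2, 1 / 2, by norm_num, by norm_num, by norm_num, by module⟩
  have hfix := hx.2 (hball (by rwa [Real.dist_0_eq_abs, abs_neg]))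
    (hball (by rwa [Real.dist_0_eq_abs])) hseg
  rw [add_eq_left, smul_eq_zero] at hfix
  exact hfix.resolve_left (by linarith)

lemma eventually_add_mul_le {a b c : ℝ} (hac : a ≤ c) (hb : a = c → b = 0) :
    ∀ᶠ t in 𝓝 (0 : ℝ), a + t * b ≤ c := by
  rcases hac.lt_or_eq with h | h
  · exact ((continuous_const.add (continuous_id.mul continuous_const)).tendsto' 0 a
      (by simp)).eventually_le_const h
  · simp [hb h, hac]

section
variable {V : Type*} [Fintype V] [DecidableEq V] {G : SimpleGraph V} [DecidableRel G.Adj]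

variable (G) in
def IsTight (x : G.edgeSet → ℝ) (U : Finset V) : Prop :=
  U.Nonempty ∧ rowSum G x U = #U - 1

lemma eventually_add_smul_mem_MWF {x d : G.edgeSet → ℝ} (hx : x ∈ MWF G)
    (hd₀ : ∀ e, x e = 0 → d e = 0) (hdU : ∀ U, IsTight G x U → rowSum G d U = 0) :
    ∀ᶠ t in 𝓝 (0 : ℝ), x + t • d ∈ MWF G := by
  have hE : ∀ e, ∀ᶠ t in 𝓝 (0 : ℝ), 0 ≤ (x + t • d) e := fun e => by
    filter_upwards [eventually_add_mul_le (b := -d e) (neg_nonpos.2 (hx.1 e))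
      fun h => by rw [hd₀ e (neg_eq_zero.1 h), neg_zero]] with t ht
    simp only [Pi.add_apply, Pi.smul_apply, smul_eq_mul]
    linarith
  have hU : ∀ U : Finset V, ∀ᶠ t in 𝓝 (0 : ℝ), U.Nonempty → rowSum G (x + t • d) U ≤ #U - 1 :=
    fun U => by
      by_cases hne : U.Nonempty
      · filter_upwards [eventually_add_mul_le (hx.2 U hne) fun h => hdU U ⟨hne, h⟩] with t ht _
        rwa [rowSum_add, rowSum_smul]
      · exact .of_forall fun _ h => absurd h hne
  filter_upwards [eventually_all.2 hE, eventually_all.2 hU] with t h₁ h₂ using ⟨h₁, h₂⟩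

lemma eq_zero_of_mem_extremePoints_MWF {x d : G.edgeSet → ℝ}
    (hx : x ∈ (MWF G).extremePoints ℝ) (hd₀ : ∀ e, x e = 0 → d e = 0)
    (hdU : ∀ U, IsTight G x U → rowSum G d U = 0) : d = 0 :=
  eq_zero_of_mem_extremePoints_of_eventually hx (eventually_add_smul_mem_MWF hx.1 hd₀ hdU)

lemma rowSum_add_rowSum_le {x : G.edgeSet → ℝ} (hx : ∀ e, 0 ≤ x e) (U W : Finset V) :
    rowSum G x U + rowSum G x W ≤ rowSum G x (U ∩ W) + rowSum G x (U ∪ W) := by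
  have hsub : edgesIn G U ∪ edgesIn G W ⊆ edgesIn G (U ∪ W) :=
    union_subset (edgesIn_mono subset_union_left) (edgesIn_mono subset_union_right)
  simp only [rowSum_eq_sum, edgesIn_inter]
  rw [← sum_union_inter, add_comm]
  exact add_le_add_right (sum_le_sum_of_subset_of_nonneg hsub fun e _ _ => hx e) _

lemma IsTight.inter {x : G.edgeSet → ℝ} (hx : x ∈ MWF G) {U W : Finset V}
    (hU : IsTight G x U) (hW : IsTight G x W) (hUW : (U ∩ W).Nonempty) :
    IsTight G x (U ∩ W) := by
  refine ⟨hUW, le_antisymm (hx.2 _ hUW) ?_⟩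
  have := rowSum_add_rowSum_le hx.1 U W
  have := hx.2 _ (hU.1.mono (subset_union_left (s₂ := W)))
  have : (#(U ∩ W) : ℝ) + #(U ∪ W) = #U + #W := by exact_mod_cast card_inter_add_card_union U W
  linarith [hU.2, hW.2]

-- A tight row has integral right-hand side, so it cannot carry a single fractional entry.
lemma exists_ne_mem_Ioo_of_isTight {x : G.edgeSet → ℝ} (hx : x ∈ MWF G) {S : Finset V}
    (hS : IsTight G x S) {e : G.edgeSet} (he : e ∈ edgesIn G S) (hxe : x e ∈ Set.Ioo 0 1) :
    ∃ f ∈ edgesIn G S, f ≠ e ∧ x f ∈ Set.Ioo 0 1 := by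
  by_contra! hno
  have h01 : ∀ f ∈ (edgesIn G S).erase e, x f = if x f = 1 then 1 else 0 := fun f hf => by
    obtain ⟨hfe, hfS⟩ := mem_erase.1 hf
    split_ifs with h1
    · exact h1
    · by_contra h0
      exact hno f hfS hfe ⟨lt_of_le_of_ne (hx.1 f) (Ne.symm h0),
        lt_of_le_of_ne (le_one_of_mem_MWF hx f) h1⟩
  have hsum := hS.2
  rw [rowSum_eq_sum, ← add_sum_erase _ _ he, sum_congr rfl h01, sum_boole] at hsum
  obtain ⟨h0, h1⟩ := hxe
  have hint : x e = ((#S - 1 - #{f ∈ (edgesIn G S).erase e | x f = 1} : ℤ) : ℝ) := by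
    push_cast
    linarith
  rw [hint] at h0 h1
  norm_cast at h0 h1
  omega

-- Take two fractional edges of a smallest tight set spanning a fractional edge: by uncrossing,
-- a tight set spanning either of them contains that whole smallest set.
lemma exists_ne_mem_Ioo_forall_isTight {x : G.edgeSet → ℝ} (hx : x ∈ MWF G)
    (hT : ∃ U, IsTight G x U ∧ ∃ e ∈ edgesIn G U, x e ∈ Set.Ioo 0 1) :
    ∃ e f, e ≠ f ∧ x e ∈ Set.Ioo 0 1 ∧ x f ∈ Set.Ioo 0 1 ∧
      ∀ U, IsTight G x U → (e ∈ edgesIn G U ↔ f ∈ edgesIn G U) := by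
  classical
  set T : Finset (Finset V) := {U | IsTight G x U ∧ ∃ e ∈ edgesIn G U, x e ∈ Set.Ioo 0 1}
  obtain ⟨S, hST, hmin⟩ := T.exists_min_image card (by simpa [T, Finset.Nonempty] using hT)
  obtain ⟨hS, e, heS, hxe⟩ := (mem_filter.1 hST).2
  obtain ⟨f, hfS, hfe, hxf⟩ := exists_ne_mem_Ioo_of_isTight hx hS heS hxe
  have hsub : ∀ g ∈ edgesIn G S, x g ∈ Set.Ioo 0 1 → ∀ U, IsTight G x U →
      g ∈ edgesIn G U → edgesIn G S ⊆ edgesIn G U := by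
    intro g hgS hxg U hU hgU
    have hgUS : g ∈ edgesIn G (U ∩ S) := by rw [edgesIn_inter]; exact mem_inter.2 ⟨hgU, hgS⟩
    have hUS := hU.inter hx hS (nonempty_of_mem_edgesIn hgUS)
    have hcard := hmin _ (mem_filter.2 ⟨mem_univ _, hUS, g, hgUS, hxg⟩)
    exact edgesIn_mono (inter_eq_right.1 (eq_of_subset_of_card_le inter_subset_right hcard))
  exact ⟨e, f, hfe.symm, hxe, hxf, fun U hU =>
    ⟨fun h => hsub e heS hxe U hU h hfS, fun h => hsub f hfS hxf U hU h heS⟩⟩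

theorem eq_zero_or_eq_one_of_mem_extremePoints {x : G.edgeSet → ℝ}
    (hx : x ∈ (MWF G).extremePoints ℝ) (e : G.edgeSet) : x e = 0 ∨ x e = 1 := by
  by_contra! h
  have hxe : x e ∈ Set.Ioo 0 1 :=
    ⟨lt_of_le_of_ne (hx.1.1 e) h.1.symm, lt_of_le_of_ne (le_one_of_mem_MWF hx.1 e) h.2⟩
  by_cases hT : ∃ U, IsTight G x U ∧ ∃ e ∈ edgesIn G U, x e ∈ Set.Ioo 0 1
  · obtain ⟨e₁, e₂, hne, h₁, h₂, hiff⟩ := exists_ne_mem_Ioo_forall_isTight hx.1 hT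
    have hd := eq_zero_of_mem_extremePoints_MWF hx (d := unitVec G e₁ - unitVec G e₂)
      (fun f hf => by
        have h₁f : f ≠ e₁ := by rintro rfl; exact h₁.1.ne' hf
        have h₂f : f ≠ e₂ := by rintro rfl; exact h₂.1.ne' hf
        simp [unitVec, h₁f, h₂f])
      (fun U hU => by simp [rowSum_sub, rowSum_unitVec, hiff U hU])
    simpa [unitVec, hne] using congrFun hd e₁
  · push Not at hT
    have hd := eq_zero_of_mem_extremePoints_MWF hx (d := unitVec G e)
      (fun f hf => by
        have : f ≠ e := by rintro rfl; exact hxe.1.ne' hf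
        simp [unitVec, this])
      (fun U hU => by
        rw [rowSum_unitVec, if_neg fun heU => (hT U hU e heU) hxe])
    simpa [unitVec] using congrFun hd e

theorem exists_eq_chiVec_of_mem_extremePoints {x : G.edgeSet → ℝ}
    (hx : x ∈ (MWF G).extremePoints ℝ) : ∃ F, x = chiVec G F := by
  classical
  refine ⟨univ.filter fun e => x e = 1, funext fun e => ?_⟩
  rcases eq_zero_or_eq_one_of_mem_extremePoints hx e with h | h <;> simp [chiVec, h]

lemma singledOut_of_forall_disjoint {e : G.edgeSet} {S : Finset G.edgeSet}
    (hS : ∀ f ∈ S, ∀ v ∈ (f : Sym2 V), v ∉ (e : Sym2 V)) : SingledOut G e S := by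
  intro f hf
  refine ⟨(e : Sym2 V).toFinset ∪ (f : Sym2 V).toFinset, mem_edgesIn.2 fun v hv => by simp [hv],
    eq_singleton_iff_unique_mem.2 ⟨mem_inter.2 ⟨hf, mem_edgesIn.2 fun v hv => by simp [hv]⟩, ?_⟩⟩
  intro f' hf'
  obtain ⟨hf'S, hf'U⟩ := mem_inter.1 hf'
  refine edge_eq_of_forall_mem fun v hv => ?_
  simpa [hS f' hf'S v hv] using mem_edgesIn.1 hf'U v hv

-- Two edges of `S` spanned by the at most three endpoints of `e` and `f` would form a
-- triangle with `e`, which a point of `MWF G` cannot carry.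
lemma singledOut_of_forall_adjacent {F S : Finset G.edgeSet} {e : G.edgeSet}
    (hF : chiVec G F ∈ MWF G) (he : e ∈ F) (hSF : S ⊆ F.erase e)
    (hS : ∀ f ∈ S, ∃ v ∈ (f : Sym2 V), v ∈ (e : Sym2 V)) : SingledOut G e S := by
  intro f hf
  obtain ⟨v, hvf, hve⟩ := hS f hf
  have hU : #((e : Sym2 V).toFinset ∪ (f : Sym2 V).toFinset) ≤ 3 := by
    have hcap : 1 ≤ #((e : Sym2 V).toFinset ∩ (f : Sym2 V).toFinset) :=
      one_le_card.2 ⟨v, by simp [hvf, hve]⟩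
    have := card_union_add_card_inter (e : Sym2 V).toFinset (f : Sym2 V).toFinset
    rw [card_toFinset_edge, card_toFinset_edge] at this
    omega
  set U := (e : Sym2 V).toFinset ∪ (f : Sym2 V).toFinset
  have heU : e ∈ edgesIn G U := mem_edgesIn.2 fun v hv => by simp [U, hv]
  have hfU : f ∈ edgesIn G U := mem_edgesIn.2 fun v hv => by simp [U, hv]
  refine ⟨U, heU, eq_singleton_iff_unique_mem.2 ⟨mem_inter.2 ⟨hf, hfU⟩, ?_⟩⟩
  intro f' hf'
  by_contra hf'f
  obtain ⟨hf'S, hf'U⟩ := mem_inter.1 hf'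
  have hfe : f ≠ e := (mem_erase.1 (hSF hf)).1
  have hf'e : f' ≠ e := (mem_erase.1 (hSF hf'S)).1
  have hsub : {e, f, f'} ⊆ edgesIn G U ∩ F := by
    simp only [insert_subset_iff, singleton_subset_iff, mem_inter]
    exact ⟨⟨heU, he⟩, ⟨hfU, mem_of_mem_erase (hSF hf)⟩, ⟨hf'U, mem_of_mem_erase (hSF hf'S)⟩⟩
  have h3 : #({e, f, f'} : Finset G.edgeSet) = 3 := by
    rw [card_insert_of_notMem (by simp [hfe.symm, hf'e.symm]), card_pair (Ne.symm hf'f)]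
  have := card_le_card hsub
  have := card_edgesIn_inter_add_one_le hF (nonempty_of_mem_edgesIn heU)
  omega

variable (G) in
abbrev UnitCircuitPath : ℕ → (G.edgeSet → ℝ) → (G.edgeSet → ℝ) → Prop :=
  RelPath (· ∈ (MWF G).extremePoints ℝ) (IsUnitCircuitStep G)

lemma UnitCircuitPath.reverse {n : ℕ} {x y : G.edgeSet → ℝ} (p : UnitCircuitPath G n x y) :
    UnitCircuitPath G n y x :=
  RelPath.reverse IsUnitCircuitStep.symm p

theorem unitCircuitPath_singleton {F : Finset G.edgeSet} (hF : chiVec G F ∈ MWF G)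
    {e : G.edgeSet} (he : e ∈ F) : UnitCircuitPath G 4 (chiVec G {e}) (chiVec G F) := by
  set S₁ := (F.erase e).filter fun f : G.edgeSet => ∃ v ∈ (f : Sym2 V), v ∈ (e : Sym2 V)
  set S₂ := (F.erase e).filter fun f : G.edgeSet => ¬∃ v ∈ (f : Sym2 V), v ∈ (e : Sym2 V)
  have hS₁ : SingledOut G e S₁ :=
    singledOut_of_forall_adjacent hF he (filter_subset _ _) fun f hf => (mem_filter.1 hf).2
  have hS₂ : SingledOut G e S₂ := singledOut_of_forall_disjoint fun f hf v hvf hve =>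
    (mem_filter.1 hf).2 ⟨v, hvf, hve⟩
  have heS₁ : e ∉ S₁ := fun h => (mem_erase.1 (mem_filter.1 h).1).1 rfl
  have heS₂ : e ∉ S₂ := fun h => (mem_erase.1 (mem_filter.1 h).1).1 rfl
  have hS₁₂ : S₁ ∪ S₂ = F.erase e := filter_union_filter_not_eq _ _
  have pt : ∀ A ⊆ F, chiVec G A ∈ (MWF G).extremePoints ℝ := fun A hA =>
    chiVec_mem_extremePoints (chiVec_mem_MWF_of_subset hA hF)
  have hS₁F : S₁ ⊆ F := (filter_subset _ _).trans (erase_subset _ _)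
  have step₁ := isUnitCircuitStep_exchange (notMem_empty e) heS₁ (disjoint_empty_left _) hS₁
  have step₂ := isUnitCircuitStep_insert heS₁
  have step₃ := isUnitCircuitStep_exchange heS₁ heS₂ (disjoint_filter_filter_not _ _ _) hS₂
  have step₄ := isUnitCircuitStep_insert (notMem_erase e F)
  rw [insert_empty, empty_union] at step₁
  rw [hS₁₂] at step₃
  rw [insert_erase he] at step₄
  exact .cons (pt _ (singleton_subset_iff.2 he)) step₁ <| .cons (pt _ hS₁F) step₂ <|
    .cons (pt _ (insert_subset he hS₁F)) step₃ <| .cons (pt _ (erase_subset e F)) step₄ <|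
    .nil (pt F subset_rfl)

lemma isUnitCircuitStep_of_card_le_one {A B : Finset G.edgeSet} (hA : #A ≤ 1) (hB : #B ≤ 1)
    (hAB : A ≠ B) : IsUnitCircuitStep G (chiVec G A) (chiVec G B) := by
  wlog hA' : A.Nonempty generalizing A B
  · rw [not_nonempty_iff_eq_empty] at hA'
    subst hA'
    exact (this hB hA hAB.symm (nonempty_iff_ne_empty.2 hAB.symm)).symm
  obtain ⟨a, ha⟩ := hA'
  obtain rfl : A = {a} := eq_singleton_iff_unique_mem.2 ⟨ha, fun b hb => card_le_one.1 hA b hb a ha⟩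
  have haB : a ∉ B := fun h => hAB (eq_singleton_iff_unique_mem.2 ⟨h, fun b hb =>
    card_le_one.1 hB b hb a h⟩).symm
  simpa using isUnitCircuitStep_exchange (notMem_empty a) haB (disjoint_empty_left B)
    (singledOut_of_card_le_one a hB)

lemma exists_unitCircuitPath_le_one_of_card_le_one {A B : Finset G.edgeSet} (hA : #A ≤ 1)
    (hB : #B ≤ 1) (hA' : chiVec G A ∈ MWF G) (hB' : chiVec G B ∈ MWF G) :
    ∃ n ≤ 1, UnitCircuitPath G n (chiVec G A) (chiVec G B) := by
  by_cases hAB : A = B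
  · subst hAB
    exact ⟨0, zero_le_one, .nil (chiVec_mem_extremePoints hA')⟩
  · exact ⟨1, le_rfl, .single (chiVec_mem_extremePoints hA') (chiVec_mem_extremePoints hB')
      (isUnitCircuitStep_of_card_le_one hA hB hAB)⟩

lemma exists_card_le_one_unitCircuitPath {F : Finset G.edgeSet} (hF : chiVec G F ∈ MWF G) :
    ∃ A ⊆ F, #A ≤ 1 ∧ ∃ n ≤ 4, UnitCircuitPath G n (chiVec G A) (chiVec G F) := by
  rcases F.eq_empty_or_nonempty with rfl | ⟨e, he⟩
  · exact ⟨∅, subset_rfl, by simp, 0, by norm_num, .nil (chiVec_mem_extremePoints hF)⟩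
  · exact ⟨{e}, singleton_subset_iff.2 he, by simp, 4, le_rfl, unitCircuitPath_singleton hF he⟩

theorem exists_unitCircuitPath_zero_le_five {F : Finset G.edgeSet} (hF : chiVec G F ∈ MWF G) :
    ∃ n ≤ 5, UnitCircuitPath G n 0 (chiVec G F) := by
  obtain ⟨A, hAF, hA, n, hn, p⟩ := exists_card_le_one_unitCircuitPath hF
  obtain ⟨m, hm, q⟩ := exists_unitCircuitPath_le_one_of_card_le_one (by simp) hA
    (chiVec_mem_MWF_of_subset (empty_subset F) hF) (chiVec_mem_MWF_of_subset hAF hF)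
  rw [chiVec_empty] at q
  exact ⟨m + n, by omega, q.append p⟩

theorem exists_unitCircuitPath_le_nine {x y : G.edgeSet → ℝ}
    (hx : x ∈ (MWF G).extremePoints ℝ) (hy : y ∈ (MWF G).extremePoints ℝ) :
    ∃ n ≤ 9, UnitCircuitPath G n x y := by
  obtain ⟨Fx, rfl⟩ := exists_eq_chiVec_of_mem_extremePoints hx
  obtain ⟨Fy, rfl⟩ := exists_eq_chiVec_of_mem_extremePoints hy
  obtain ⟨A, hAF, hA, n, hn, p⟩ := exists_card_le_one_unitCircuitPath hx.1
  obtain ⟨B, hBF, hB, m, hm, q⟩ := exists_card_le_one_unitCircuitPath hy.1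
  obtain ⟨k, hk, r⟩ := exists_unitCircuitPath_le_one_of_card_le_one hA hB
    (chiVec_mem_MWF_of_subset hAF hx.1) (chiVec_mem_MWF_of_subset hBF hy.1)
  exact ⟨n + k + m, by omega, (p.reverse.append r).append q⟩

lemma unitCircuitPath_zero_chiVec {F : Finset G.edgeSet} (hF : chiVec G F ∈ MWF G) :
    UnitCircuitPath G #F 0 (chiVec G F) := by
  induction F using Finset.induction_on with
  | empty => simpa [chiVec_empty] using .nil (chiVec_mem_extremePoints hF)
  | insert e A he ih =>
    have hA := chiVec_mem_MWF_of_subset (subset_insert e A) hF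
    rw [card_insert_of_notMem he]
    exact (ih hA).append (.single (chiVec_mem_extremePoints hA) (chiVec_mem_extremePoints hF)
      (isUnitCircuitStep_insert he))

theorem exists_unitCircuitPath_le_six (hV : Fintype.card V ≤ 4) {x y : G.edgeSet → ℝ}
    (hx : x ∈ (MWF G).extremePoints ℝ) (hy : y ∈ (MWF G).extremePoints ℝ) :
    ∃ n ≤ 6, UnitCircuitPath G n x y := by
  have hcard : ∀ {F : Finset G.edgeSet}, chiVec G F ∈ MWF G → #F ≤ 3 := fun {F} hF => by
    rcases F.eq_empty_or_nonempty with rfl | hne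
    · simp
    · have := card_lt_card_of_chiVec_mem hF hne
      omega
  obtain ⟨Fx, rfl⟩ := exists_eq_chiVec_of_mem_extremePoints hx
  obtain ⟨Fy, rfl⟩ := exists_eq_chiVec_of_mem_extremePoints hy
  have := hcard hx.1
  have := hcard hy.1
  exact ⟨#Fx + #Fy, by omega,
    (unitCircuitPath_zero_chiVec hx.1).reverse.append (unitCircuitPath_zero_chiVec hy.1)⟩

lemma UnitCircuitPath.exists_walk {n : ℕ} {x y : G.edgeSet → ℝ} (p : UnitCircuitPath G n x y) :
    ∃ w : Fin (n + 1) → G.edgeSet → ℝ, w 0 = x ∧ w (Fin.last n) = y ∧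
      (∀ i, w i ∈ (MWF G).extremePoints ℝ) ∧
      ∀ i : Fin n, IsMaxStep01 G (w i.castSucc) (w i.succ) := by
  obtain ⟨w, h0, hl, hw, hs⟩ := p.exists_fin
  exact ⟨w, h0, hl, hw, fun i => (hs i).isMaxStep01 (hw _).1 (hw _).1⟩

lemma UnitCircuitPath.exists_isCircuitWalk {n N : ℕ} {x y : G.edgeSet → ℝ}
    (p : UnitCircuitPath G n x y) (hn : n ≤ N) :
    ∃ (k : ℕ) (w : Fin (k + 1) → G.edgeSet → ℝ), k ≤ N ∧ w 0 = x ∧ w (Fin.last k) = y ∧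
      IsCircuitWalk G k w := by
  obtain ⟨w, h0, hl, hw, hs⟩ := p.exists_walk
  exact ⟨n, w, hn, h0, hl, fun i => (hw i).1, fun i => (hs i).isMaxStep⟩

end

/-- Every extreme point of the maximum weight forest polytope corresponding to a forest
`F` is reachable from the zero vector by a circuit walk of at most 5 maximal steps along
0/±1 circuits, all of whose points are extreme points; consequently the circuit diameter
of the polytope is at most 9, and at most 6 when the graph has at most 4 vertices. -/
theorem stmt17 {V : Type*} [Fintype V] [DecidableEq V] (G : SimpleGraph V)
    [DecidableRel G.Adj] :
    (∀ F : Finset G.edgeSet, (edgeSub G (↑F : Set G.edgeSet)).IsAcyclic →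
      chiVec G F ∈ Set.extremePoints ℝ (MWF G) →
      ∃ (k : ℕ) (x : Fin (k + 1) → G.edgeSet → ℝ), k ≤ 5 ∧
        x 0 = 0 ∧ x (Fin.last k) = chiVec G F ∧
        (∀ i, x i ∈ Set.extremePoints ℝ (MWF G)) ∧
        (∀ i : Fin k, IsMaxStep01 G (x i.castSucc) (x i.succ))) ∧
    (∀ x y : G.edgeSet → ℝ, x ∈ Set.extremePoints ℝ (MWF G) →
      y ∈ Set.extremePoints ℝ (MWF G) →
      ∃ (k : ℕ) (w : Fin (k + 1) → G.edgeSet → ℝ), k ≤ 9 ∧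
        w 0 = x ∧ w (Fin.last k) = y ∧ IsCircuitWalk G k w) ∧
    (Fintype.card V ≤ 4 →
      ∀ x y : G.edgeSet → ℝ, x ∈ Set.extremePoints ℝ (MWF G) →
        y ∈ Set.extremePoints ℝ (MWF G) →
        ∃ (k : ℕ) (w : Fin (k + 1) → G.edgeSet → ℝ), k ≤ 6 ∧
          w 0 = x ∧ w (Fin.last k) = y ∧ IsCircuitWalk G k w) := by
  refine ⟨fun F _ hF => ?_, fun x y hx hy => ?_, fun hV x y hx hy => ?_⟩
  · obtain ⟨n, hn, p⟩ := exists_unitCircuitPath_zero_le_five hF.1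
    obtain ⟨w, h0, hl, hw, hs⟩ := p.exists_walk
    exact ⟨n, w, hn, h0, hl, hw, hs⟩
  · obtain ⟨n, hn, p⟩ := exists_unitCircuitPath_le_nine hx hy
    exact p.exists_isCircuitWalk hn
  · obtain ⟨n, hn, p⟩ := exists_unitCircuitPath_le_six hV hx hy
    exact p.exists_isCircuitWalk hn
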